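/- Let P and Q be orthogonal projections on a real inner product space of matrices with ‖QP‖ ≤ √(1−δ+εδ) for some 0 < δ < 1, 0 ≤ ε ≤ 1/2. Then for every matrix H, ‖PH − QH‖_F² ≥ (δ(1−ε)/(1+√(1−δ+εδ)))·(‖PH‖_F² + ‖QH‖_F²) ≥ (δ/4)·(‖PH‖_F² + ‖QH‖_F²). -/

import Mathlib

/-!
Writing `s = √(1 - δ(1 - ε))`, the constant `δ(1 - ε)/(1 + s)` is just `1 - s`. Since `Q` is an
orthogonal projection, `⟪PH, QH⟫ = ⟪QPH, QH⟫ ≤ s ‖PH‖ ‖QH‖`, and expanding the square gives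
`‖PH - QH‖² ≥ ‖PH‖² + ‖QH‖² - 2s ‖PH‖ ‖QH‖ ≥ (1 - s)(‖PH‖² + ‖QH‖²)`. Finally
`1 - s ≥ δ(1 - ε)/2 ≥ δ/4` by concavity of the square root.
-/

open RealInnerProductSpace

lemma Real.sqrt_one_sub_le_one_sub_half {x : ℝ} (hx : x ≤ 2) : √(1 - x) ≤ 1 - x / 2 :=
  Real.sqrt_le_iff.2 ⟨by linarith, by nlinarith [sq_nonneg x]⟩

lemma div_one_add_sqrt_one_sub {t : ℝ} (ht : t ≤ 1) : t / (1 + √(1 - t)) = 1 - √(1 - t) := by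
  rw [div_eq_iff (by positivity)]
  linear_combination Real.sq_sqrt (sub_nonneg.2 ht)

section InnerProductSpace

variable {E : Type*} [NormedAddCommGroup E] [InnerProductSpace ℝ E]

lemma one_sub_mul_le_norm_sub_sq_of_inner_le {u v : E} {s : ℝ} (hs : 0 ≤ s)
    (huv : ⟪u, v⟫ ≤ s * ‖u‖ * ‖v‖) :
    (1 - s) * (‖u‖ ^ 2 + ‖v‖ ^ 2) ≤ ‖u - v‖ ^ 2 := by
  rw [norm_sub_sq_real]
  nlinarith [mul_nonneg hs (sq_nonneg (‖u‖ - ‖v‖))]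

lemma LinearMap.IsSymmetric.inner_le_of_norm_map_le {Q : E →ₗ[ℝ] E} (hQ : Q.IsSymmetric)
    (hQidem : ∀ x, Q (Q x) = Q x) {s : ℝ} {x : E} (hx : ‖Q x‖ ≤ s * ‖x‖) (y : E) :
    ⟪x, Q y⟫ ≤ s * ‖x‖ * ‖Q y‖ :=
  calc ⟪x, Q y⟫ = ⟪Q x, Q y⟫ := by rw [hQ, hQidem]
    _ ≤ ‖Q x‖ * ‖Q y‖ := real_inner_le_norm _ _
    _ ≤ s * ‖x‖ * ‖Q y‖ := mul_le_mul_of_nonneg_right hx (norm_nonneg _)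

end InnerProductSpace

theorem stmt9_general {E : Type*} [NormedAddCommGroup E] [InnerProductSpace ℝ E]
    (P Q : E →ₗ[ℝ] E)
    (hPidem : ∀ x, P (P x) = P x) (hQidem : ∀ x, Q (Q x) = Q x)
    (hQsa : ∀ x y, ⟪Q x, y⟫ = ⟪x, Q y⟫)
    (δ ε : ℝ) (hδ0 : 0 < δ) (hδ1 : δ < 1) (hε0 : 0 ≤ ε) (hε1 : ε ≤ 1 / 2)
    (hQP : ∀ x, ‖Q (P x)‖ ≤ Real.sqrt (1 - δ + ε * δ) * ‖x‖) :
    ∀ H : E,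
      (δ * (1 - ε) / (1 + Real.sqrt (1 - δ + ε * δ))) * (‖P H‖ ^ 2 + ‖Q H‖ ^ 2)
          ≤ ‖P H - Q H‖ ^ 2 ∧
      (δ / 4) * (‖P H‖ ^ 2 + ‖Q H‖ ^ 2) ≤
        (δ * (1 - ε) / (1 + Real.sqrt (1 - δ + ε * δ))) * (‖P H‖ ^ 2 + ‖Q H‖ ^ 2) := by
  intro H
  have hrad : 1 - δ + ε * δ = 1 - δ * (1 - ε) := by ring
  rw [hrad] at hQP ⊢
  have ht : δ * (1 - ε) ≤ 1 := by nlinarith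
  rw [div_one_add_sqrt_one_sub ht]
  have hQPH : ‖Q (P H)‖ ≤ √(1 - δ * (1 - ε)) * ‖P H‖ := by simpa only [hPidem] using hQP (P H)
  refine ⟨one_sub_mul_le_norm_sub_sq_of_inner_le (Real.sqrt_nonneg _)
    (LinearMap.IsSymmetric.inner_le_of_norm_map_le hQsa hQidem hQPH H),
    mul_le_mul_of_nonneg_right ?_ (by positivity)⟩
  nlinarith [Real.sqrt_one_sub_le_one_sub_half (x := δ * (1 - ε)) (by linarith)]

/-- If P and Q are orthogonal projections on a real inner product space with
‖QP‖ ≤ √(1−δ+εδ), then for every H,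
‖PH − QH‖² ≥ (δ(1−ε)/(1+√(1−δ+εδ)))·(‖PH‖² + ‖QH‖²) ≥ (δ/4)·(‖PH‖² + ‖QH‖²). -/
theorem stmt9 {E : Type*} [NormedAddCommGroup E] [InnerProductSpace ℝ E]
    (P Q : E →ₗ[ℝ] E)
    (hPidem : ∀ x, P (P x) = P x) (hQidem : ∀ x, Q (Q x) = Q x)
    (hPsa : ∀ x y, ⟪P x, y⟫ = ⟪x, P y⟫) (hQsa : ∀ x y, ⟪Q x, y⟫ = ⟪x, Q y⟫)
    (δ ε : ℝ) (hδ0 : 0 < δ) (hδ1 : δ < 1) (hε0 : 0 ≤ ε) (hε1 : ε ≤ 1 / 2)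
    (hQP : ∀ x, ‖Q (P x)‖ ≤ Real.sqrt (1 - δ + ε * δ) * ‖x‖) :
    ∀ H : E,
      (δ * (1 - ε) / (1 + Real.sqrt (1 - δ + ε * δ))) * (‖P H‖ ^ 2 + ‖Q H‖ ^ 2)
          ≤ ‖P H - Q H‖ ^ 2 ∧
      (δ / 4) * (‖P H‖ ^ 2 + ‖Q H‖ ^ 2) ≤
        (δ * (1 - ε) / (1 + Real.sqrt (1 - δ + ε * δ))) * (‖P H‖ ^ 2 + ‖Q H‖ ^ 2) :=
  stmt9_general P Q hPidem hQidem hQsa δ ε hδ0 hδ1 hε0 hε1 hQP
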